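/- arXiv:2512.15854 — 2 statements merged into one kernel-verified Lean document; each statement's English description precedes it below -/
import Mathlib

section
/- Let N, n : ℕ with n ≥ 1 and let w : ℕ → ℝ be any weight function. Then Σ over all n-tuples of Pauli words (α : Fin n → (Fin N → Fin 4)) of (∏_{k} w (|α k|)) · Complex.normSq (Matrix.trace (∏_{k} P (α k))) (the product of matrices taken in the order k = 0, 1, …, n−1) equals Σ_{s = 0}^{N} (N.choose s) · 3^s · (Σ_{l = 0}^{N} w l · Σ_{j = 0}^{min s l} (−1)^j · 3^{l − j} · (s.choose j) · ((N − s).choose (l − j)))^n. -/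
/-!
Write `P_a` for Pauli strings and `ε(a, b) = ±1` for the sign in `P_a P_b P_aᴴ = ε(a, b) P_b`.
Since `|tr X|² = tr (conj X ⊗ X)` and `X ↦ conj X ⊗ X` is multiplicative, the left-hand side
is `tr Mⁿ` for `M = ∑_a w(|a|) conj P_a ⊗ P_a`, the matrix of the channel
`X ↦ ∑_a w(|a|) P_a X P_aᴴ` acting on `vec X`. The Pauli strings form an orthogonal basis of
eigenvectors of this channel, with eigenvalues `λ_b = ∑_a w(|a|) ε(a, b)`, so `tr Mⁿ = ∑_b λ_bⁿ`.
Finally `λ_b` depends only on `|b|`: the generating polynomial `∑_a ε(a, b) X^|a|` factors site by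
site as `(1 - X)^|b| (1 + 3X)^(N - |b|)`, whose coefficients are the quaternary Krawtchouk
numbers, and there are `C(N, s) 3^s` words of weight `s`.
-/

/-- The identity and the three Pauli matrices. -/
noncomputable def pauli : Fin 4 → Matrix (Fin 2) (Fin 2) ℂ :=
  ![1, !![0, 1; 1, 0], !![0, -Complex.I; Complex.I, 0], !![1, 0; 0, -1]]

/-- The Pauli string associated to a word `α : Fin N → Fin 4`:
the `N`-fold Kronecker (tensor) product of the matrices `pauli (α i)`. -/
noncomputable def pauliString (N : ℕ) (α : Fin N → Fin 4) :
    Matrix (Fin N → Fin 2) (Fin N → Fin 2) ℂ :=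
  Matrix.of fun r c => ∏ i, pauli (α i) (r i) (c i)

/-- The weight (length) of a Pauli word: the number of non-identity sites. -/
def pauliWeight (N : ℕ) (α : Fin N → Fin 4) : ℕ :=
  (Finset.univ.filter fun i : Fin N => α i ≠ 0).card

open Matrix Polynomial
open scoped Kronecker Finset

theorem List.prod_ofFn_smul {R A : Type*} [CommMonoid R] [Monoid A] [MulAction R A]
    [IsScalarTower R A A] [SMulCommClass R A A] :
    ∀ {n : ℕ} (c : Fin n → R) (f : Fin n → A),
      (List.ofFn fun k => c k • f k).prod = (∏ k, c k) • (List.ofFn f).prod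
  | 0, _, _ => by simp
  | _ + 1, c, f => by
    simp only [List.ofFn_succ, List.prod_cons, Fin.prod_univ_succ, List.prod_ofFn_smul,
      smul_mul_smul_comm]

theorem Finset.sum_pow_eq_sum_prod_ofFn {A ι : Type*} [Semiring A] [Fintype ι] (f : ι → A) :
    ∀ n : ℕ, (∑ a, f a) ^ n = ∑ α : Fin n → ι, (List.ofFn fun k => f (α k)).prod
  | 0 => by simp
  | n + 1 => by
    rw [pow_succ', Finset.sum_pow_eq_sum_prod_ofFn f n, Finset.sum_mul_sum,
      ← Fintype.sum_prod_type', ← (Fin.consEquiv fun _ => ι).sum_comp]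
    simp [List.ofFn_succ, Fin.consEquiv]

theorem Finset.sum_smul_prod_ofFn_eq_pow {R A ι : Type*} [CommSemiring R] [Semiring A]
    [Algebra R A] [Fintype ι] (c : ι → R) (f : ι → A) (n : ℕ) :
    ∑ α : Fin n → ι, (∏ k, c (α k)) • (List.ofFn fun k => f (α k)).prod
      = (∑ a, c a • f a) ^ n := by
  simp only [Finset.sum_pow_eq_sum_prod_ofFn, List.prod_ofFn_smul]

theorem Matrix.trace_pow_of_mul_eq_mul_diagonal {m n R : Type*} [Fintype m] [Fintype n]
    [DecidableEq m] [DecidableEq n] [CommSemiring R] {M : Matrix m m R} {A : Matrix m n R}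
    {B : Matrix n m R} {d : n → R} (hAB : A * B = 1) (hBA : B * A = 1)
    (hM : M * A = A * diagonal d) (k : ℕ) :
    trace (M ^ k) = ∑ i, d i ^ k := by
  have hpow : M ^ k * A = A * diagonal d ^ k := by
    induction k with
    | zero => simp
    | succ k ih => rw [pow_succ, Matrix.mul_assoc, hM, ← Matrix.mul_assoc, ih, Matrix.mul_assoc,
        ← pow_succ]
  calc trace (M ^ k) = trace (A * (diagonal d ^ k * B)) := by
        rw [← Matrix.mul_assoc, ← hpow, Matrix.mul_assoc, hAB, Matrix.mul_one]
    _ = ∑ i, d i ^ k := by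
        rw [trace_mul_comm, Matrix.mul_assoc, hBA, Matrix.mul_one, diagonal_pow, trace_diagonal]
        rfl

namespace Matrix

variable {ι κ R : Type*} [Fintype ι] [CommSemiring R]

def kroneckerPi (A : ι → Matrix κ κ R) : Matrix (ι → κ) (ι → κ) R :=
  of fun r c => ∏ i, A i (r i) (c i)

theorem kroneckerPi_mul [DecidableEq ι] [Fintype κ] (A B : ι → Matrix κ κ R) :
    kroneckerPi A * kroneckerPi B = kroneckerPi fun i => A i * B i := by
  ext r c
  simp only [kroneckerPi, mul_apply, of_apply, Fintype.prod_sum, ← Finset.prod_mul_distrib]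

theorem conjTranspose_kroneckerPi [StarRing R] (A : ι → Matrix κ κ R) :
    (kroneckerPi A)ᴴ = kroneckerPi fun i => (A i)ᴴ := by
  ext r c
  simp [kroneckerPi, star_prod]

theorem kroneckerPi_smul (c : ι → R) (A : ι → Matrix κ κ R) :
    kroneckerPi (fun i => c i • A i) = (∏ i, c i) • kroneckerPi A := by
  ext r c
  simp [kroneckerPi, Finset.prod_mul_distrib]

theorem trace_kroneckerPi [DecidableEq ι] [Fintype κ] (A : ι → Matrix κ κ R) :
    trace (kroneckerPi A) = ∏ i, trace (A i) := by
  simp only [trace, diag, kroneckerPi, of_apply, Fintype.prod_sum]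

end Matrix

def pauliSign (x y : Fin 4) : ℝ := if x = 0 ∨ y = 0 ∨ x = y then 1 else -1

theorem pauli_mul_mul_conjTranspose (x y : Fin 4) :
    pauli x * pauli y * (pauli x)ᴴ = (pauliSign x y : ℂ) • pauli y := by
  fin_cases x <;> fin_cases y <;> ext i j <;> fin_cases i <;> fin_cases j <;>
    simp [pauli, pauliSign, Matrix.mul_apply, Fin.sum_univ_two]

theorem trace_conjTranspose_pauli_mul (x y : Fin 4) :
    trace ((pauli x)ᴴ * pauli y) = if x = y then 2 else 0 := by
  fin_cases x <;> fin_cases y <;> norm_num [pauli, Matrix.trace, Matrix.mul_apply, Fin.sum_univ_two]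

theorem pauliString_eq_kroneckerPi (N : ℕ) (a : Fin N → Fin 4) :
    pauliString N a = kroneckerPi fun i => pauli (a i) := rfl

theorem pauliString_mul_mul_conjTranspose (N : ℕ) (a b : Fin N → Fin 4) :
    pauliString N a * pauliString N b * (pauliString N a)ᴴ
      = ((∏ i, pauliSign (a i) (b i) : ℝ) : ℂ) • pauliString N b := by
  simp only [pauliString_eq_kroneckerPi, conjTranspose_kroneckerPi, kroneckerPi_mul,
    pauli_mul_mul_conjTranspose, kroneckerPi_smul, Complex.ofReal_prod]

theorem trace_conjTranspose_pauliString_mul (N : ℕ) (a b : Fin N → Fin 4) :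
    trace ((pauliString N a)ᴴ * pauliString N b) = if a = b then 2 ^ N else 0 := by
  simp only [pauliString_eq_kroneckerPi, conjTranspose_kroneckerPi, kroneckerPi_mul,
    trace_kroneckerPi, trace_conjTranspose_pauli_mul, Finset.prod_ite_zero, funext_iff]
  simp

namespace Matrix

variable {m R : Type*} [Fintype m] [DecidableEq m] [CommSemiring R] [StarRing R]

def conjKronecker : Matrix m m R →* Matrix (m × m) (m × m) R where
  toFun X := X.map star ⊗ₖ X
  map_one' := by simp
  map_mul' X Y := by
    rw [← mul_kronecker_mul]
    exact congrArg (· ⊗ₖ (X * Y)) (Matrix.map_mul (f := starRingEnd R))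

theorem trace_conjKronecker (X : Matrix m m R) :
    trace (conjKronecker X) = star (trace X) * trace X := by
  rw [conjKronecker, MonoidHom.coe_mk, OneHom.coe_mk, trace_kronecker, ← trace_conjTranspose,
    ← trace_transpose Xᴴ]
  rfl

theorem conjKronecker_mulVec_vec (X Y : Matrix m m R) :
    conjKronecker X *ᵥ vec Y = vec (X * Y * Xᴴ) := by
  rw [conjKronecker, MonoidHom.coe_mk, OneHom.coe_mk, kronecker_mulVec_vec]
  rfl

end Matrix

noncomputable def pauliTransfer (N : ℕ) (w : ℕ → ℝ) :
    Matrix ((Fin N → Fin 2) × (Fin N → Fin 2)) ((Fin N → Fin 2) × (Fin N → Fin 2)) ℂ :=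
  ∑ a, (w (pauliWeight N a) : ℂ) • conjKronecker (pauliString N a)

noncomputable def pauliFrame (N : ℕ) :
    Matrix ((Fin N → Fin 2) × (Fin N → Fin 2)) (Fin N → Fin 4) ℂ :=
  of fun p a => vec (pauliString N a) p

def pauliEigenvalue (N : ℕ) (w : ℕ → ℝ) (b : Fin N → Fin 4) : ℝ :=
  ∑ a, w (pauliWeight N a) * ∏ i, pauliSign (a i) (b i)

theorem conjTranspose_pauliFrame_mul (N : ℕ) :
    (pauliFrame N)ᴴ * pauliFrame N = (2 ^ N : ℂ) • 1 := by
  ext a b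
  change star (vec (pauliString N a)) ⬝ᵥ vec (pauliString N b) = _
  rw [star_vec_dotProduct_vec, trace_conjTranspose_pauliString_mul, Matrix.smul_apply, one_apply,
    smul_ite, smul_eq_mul, mul_one, smul_zero]

theorem inv_smul_conjTranspose_pauliFrame_mul (N : ℕ) :
    ((2 ^ N : ℂ)⁻¹ • (pauliFrame N)ᴴ) * pauliFrame N = 1 := by
  rw [Matrix.smul_mul, conjTranspose_pauliFrame_mul, smul_smul, inv_mul_cancel₀ (by simp),
    one_smul]

theorem pauliFrame_mul_inv_smul_conjTranspose (N : ℕ) :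
    pauliFrame N * ((2 ^ N : ℂ)⁻¹ • (pauliFrame N)ᴴ) = 1 :=
  (mul_eq_one_comm_of_card_eq _ _ _ (by simp [← mul_pow])).mpr
    (inv_smul_conjTranspose_pauliFrame_mul N)

theorem pauliTransfer_mul_pauliFrame (N : ℕ) (w : ℕ → ℝ) :
    pauliTransfer N w * pauliFrame N
      = pauliFrame N * diagonal fun b => (pauliEigenvalue N w b : ℂ) := by
  ext p b
  rw [mul_diagonal]
  change (pauliTransfer N w *ᵥ vec (pauliString N b)) p = vec (pauliString N b) p * _
  simp only [pauliTransfer, sum_mulVec, smul_mulVec, conjKronecker_mulVec_vec,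
    pauliString_mul_mul_conjTranspose, vec_smul, pauliEigenvalue, Finset.sum_apply, Pi.smul_apply,
    smul_eq_mul, Complex.ofReal_sum, Complex.ofReal_mul, Finset.mul_sum]
  exact Finset.sum_congr rfl fun a _ => by ring

theorem trace_pauliTransfer_pow (N : ℕ) (w : ℕ → ℝ) (n : ℕ) :
    trace (pauliTransfer N w ^ n) = ((∑ b, pauliEigenvalue N w b ^ n : ℝ) : ℂ) := by
  push_cast
  exact trace_pow_of_mul_eq_mul_diagonal (pauliFrame_mul_inv_smul_conjTranspose N)
    (inv_smul_conjTranspose_pauliFrame_mul N) (pauliTransfer_mul_pauliFrame N w) n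

def krawtchouk (N s l : ℕ) : ℝ :=
  ∑ j ∈ Finset.range (min s l + 1),
    (-1 : ℝ) ^ j * 3 ^ (l - j) * (s.choose j : ℝ) * ((N - s).choose (l - j) : ℝ)

theorem pauliWeight_le (N : ℕ) (a : Fin N → Fin 4) : pauliWeight N a ≤ N :=
  (Finset.card_filter_le _ _).trans_eq (Finset.card_fin N)

theorem coeff_one_add_C_mul_X_pow {R : Type*} [CommSemiring R] (c : R) (m k : ℕ) :
    ((1 + C c * X) ^ m).coeff k = c ^ k * m.choose k := by
  have h : (1 + C c * X) ^ m = ((1 + X) ^ m).comp (C c * X) := by simp [add_comp]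
  rw [h, comp_C_mul_X_coeff, coeff_one_add_X_pow, mul_comm]

theorem coeff_pow_mul_pow_eq_krawtchouk (N s l : ℕ) :
    ((1 + C (-1 : ℝ) * X) ^ s * (1 + C (3 : ℝ) * X) ^ (N - s)).coeff l = krawtchouk N s l := by
  rw [coeff_mul, Finset.Nat.sum_antidiagonal_eq_sum_range_succ_mk, krawtchouk,
    ← Finset.sum_subset (Finset.range_subset_range.mpr (by omega : min s l + 1 ≤ l + 1))]
  · refine Finset.sum_congr rfl fun j _ => ?_
    simp only [coeff_one_add_C_mul_X_pow]
    ring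
  · intro j hjl hj
    rw [Finset.mem_range] at hjl hj
    simp only [coeff_one_add_C_mul_X_pow, Nat.choose_eq_zero_of_lt (by omega : s < j),
      Nat.cast_zero, mul_zero, zero_mul]

theorem sum_C_pauliSign_mul_X_pow (y : Fin 4) :
    ∑ x : Fin 4, C (pauliSign x y) * X ^ (if x ≠ 0 then 1 else 0)
      = if y ≠ 0 then 1 + C (-1 : ℝ) * X else 1 + C (3 : ℝ) * X := by
  fin_cases y <;> simp [Fin.sum_univ_four, pauliSign, map_ofNat C 3]
  ring

theorem sum_C_prod_pauliSign_mul_X_pow_pauliWeight (N : ℕ) (b : Fin N → Fin 4) :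
    ∑ a : Fin N → Fin 4, C (∏ i, pauliSign (a i) (b i)) * X ^ pauliWeight N a
      = (1 + C (-1 : ℝ) * X) ^ pauliWeight N b * (1 + C (3 : ℝ) * X) ^ (N - pauliWeight N b) := by
  have hcard := Finset.card_filter_add_card_filter_not (s := Finset.univ) (fun i => b i ≠ 0)
  rw [Finset.card_univ, Fintype.card_fin] at hcard
  calc ∑ a : Fin N → Fin 4, C (∏ i, pauliSign (a i) (b i)) * X ^ pauliWeight N a
      = ∑ a : Fin N → Fin 4, ∏ i, C (pauliSign (a i) (b i)) * X ^ (if a i ≠ 0 then 1 else 0) := by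
        refine Finset.sum_congr rfl fun a _ => ?_
        rw [Finset.prod_mul_distrib, map_prod, Finset.prod_pow_eq_pow_sum, pauliWeight,
          Finset.card_filter]
    _ = ∏ i, ∑ x : Fin 4, C (pauliSign x (b i)) * X ^ (if x ≠ 0 then 1 else 0) :=
        (Fintype.prod_sum fun i (x : Fin 4) =>
          C (pauliSign x (b i)) * X ^ (if x ≠ 0 then 1 else 0)).symm
    _ = _ := by
        rw [Finset.prod_congr rfl fun i _ => sum_C_pauliSign_mul_X_pow (b i), Finset.prod_ite,
          Finset.prod_const, Finset.prod_const]
        congr 2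
        exact Nat.eq_sub_of_add_eq' hcard

theorem sum_prod_pauliSign_of_pauliWeight_eq (N : ℕ) (b : Fin N → Fin 4) (l : ℕ) :
    ∑ a with pauliWeight N a = l, ∏ i, pauliSign (a i) (b i)
      = krawtchouk N (pauliWeight N b) l := by
  have h := congrArg (coeff · l) (sum_C_prod_pauliSign_mul_X_pow_pauliWeight N b)
  simp only [finsetSum_coeff, coeff_C_mul_X_pow, coeff_pow_mul_pow_eq_krawtchouk] at h
  rw [← h, Finset.sum_filter]
  simp_rw [eq_comm]

theorem pauliEigenvalue_eq (N : ℕ) (w : ℕ → ℝ) (b : Fin N → Fin 4) :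
    pauliEigenvalue N w b
      = ∑ l ∈ Finset.range (N + 1), w l * krawtchouk N (pauliWeight N b) l := by
  rw [pauliEigenvalue, ← Finset.sum_fiberwise_of_maps_to (g := pauliWeight N)
    (t := Finset.range (N + 1)) fun a _ => Finset.mem_range_succ_iff.mpr (pauliWeight_le N a)]
  refine Finset.sum_congr rfl fun l _ => ?_
  rw [← sum_prod_pauliSign_of_pauliWeight_eq, Finset.mul_sum]
  exact Finset.sum_congr rfl fun a ha => by rw [(Finset.mem_filter.mp ha).2]

theorem card_pauliWeight_eq (N s : ℕ) :
    (#{a : Fin N → Fin 4 | pauliWeight N a = s} : ℝ) = N.choose s * 3 ^ s := by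
  have h := sum_prod_pauliSign_of_pauliWeight_eq N 0 s
  have hw : pauliWeight N 0 = 0 := by simp [pauliWeight]
  simpa [pauliSign, krawtchouk, hw, mul_comm] using h

theorem sum_comp_pauliWeight (N : ℕ) (g : ℕ → ℝ) :
    ∑ b : Fin N → Fin 4, g (pauliWeight N b)
      = ∑ s ∈ Finset.range (N + 1), (N.choose s : ℝ) * 3 ^ s * g s := by
  rw [← Finset.sum_fiberwise_of_maps_to (g := pauliWeight N)
    (t := Finset.range (N + 1)) fun a _ => Finset.mem_range_succ_iff.mpr (pauliWeight_le N a)]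
  refine Finset.sum_congr rfl fun s _ => ?_
  rw [← card_pauliWeight_eq, ← nsmul_eq_mul, ← Finset.sum_const]
  exact Finset.sum_congr rfl fun a ha => by rw [(Finset.mem_filter.mp ha).2]

theorem sum_prod_weight_mul_normSq_trace (N n : ℕ) (w : ℕ → ℝ) :
    ((∑ α : Fin n → (Fin N → Fin 4), (∏ k, w (pauliWeight N (α k))) *
        Complex.normSq (trace (List.ofFn fun k => pauliString N (α k)).prod) : ℝ) : ℂ)
      = trace (pauliTransfer N w ^ n) := by
  rw [pauliTransfer, ← Finset.sum_smul_prod_ofFn_eq_pow, trace_sum]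
  push_cast
  refine Finset.sum_congr rfl fun α _ => ?_
  have hprod : (List.ofFn fun k => conjKronecker (pauliString N (α k))).prod
      = conjKronecker (List.ofFn fun k => pauliString N (α k)).prod := by
    rw [map_list_prod, List.map_ofFn]
    rfl
  rw [trace_smul, hprod, trace_conjKronecker, Complex.normSq_eq_conj_mul_self, smul_eq_mul]
  rfl

theorem brownian_spin_cluster_moment_general (N n : ℕ) (w : ℕ → ℝ) :
    ∑ α : Fin n → (Fin N → Fin 4),
        (∏ k, w (pauliWeight N (α k))) *
          Complex.normSq
            (Matrix.trace ((List.ofFn fun k => pauliString N (α k)).prod))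
      = ∑ s ∈ Finset.range (N + 1), (N.choose s : ℝ) * 3 ^ s *
          (∑ l ∈ Finset.range (N + 1), w l *
              ∑ j ∈ Finset.range (min s l + 1),
                (-1 : ℝ) ^ j * 3 ^ (l - j) * (s.choose j : ℝ)
                  * ((N - s).choose (l - j) : ℝ)) ^ n := by
  have h := sum_prod_weight_mul_normSq_trace N n w
  rw [trace_pauliTransfer_pow, Complex.ofReal_inj] at h
  simp_rw [h, pauliEigenvalue_eq]
  exact sum_comp_pauliWeight N fun s => (∑ l ∈ Finset.range (N + 1), w l * krawtchouk N s l) ^ n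

theorem brownian_spin_cluster_moment (N n : ℕ) (hn : 1 ≤ n) (w : ℕ → ℝ) :
    ∑ α : Fin n → (Fin N → Fin 4),
        (∏ k, w (pauliWeight N (α k))) *
          Complex.normSq
            (Matrix.trace ((List.ofFn fun k => pauliString N (α k)).prod))
      = ∑ s ∈ Finset.range (N + 1), (N.choose s : ℝ) * 3 ^ s *
          (∑ l ∈ Finset.range (N + 1), w l *
              ∑ j ∈ Finset.range (min s l + 1),
                (-1 : ℝ) ^ j * 3 ^ (l - j) * (s.choose j : ℝ)
                  * ((N - s).choose (l - j) : ℝ)) ^ n :=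
  brownian_spin_cluster_moment_general N n w
end

section
/- Let d, d', Ω ≥ 1 be natural numbers, let T : EuclideanSpace ℂ (Fin d) →ₗ[ℂ] EuclideanSpace ℂ (Fin d') be a surjective linear map, and let μ be a probability measure on Fin Ω → EuclideanSpace ℂ (Fin d) absolutely continuous with respect to the Lebesgue (volume) measure. Then for μ-almost every tuple v, the rank of the Ω × Ω Gram matrix G with entries G i j = ⟪T (v i), T (v j)⟫ equals min Ω d'. -/
/-!
The Gram matrix of a family `u` is `Aᴴ A` for the coordinate matrix `A` of `u`, so its rank is
the dimension of the span of `u`. Adding the vectors `T (v i)` one at a time, the span gains a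
dimension unless the new vector falls into the current span; while fewer than `d'` vectors have
been added that span is a proper subspace, whose preimage under the surjection `T` is a proper
subspace of the source and hence Lebesgue-null. Fubini over the new coordinate gives the rank
`min Ω d'` for almost every tuple, and absolute continuity transfers this to `μ`.
-/

open MeasureTheory

noncomputable instance (d : ℕ) : MeasurableSpace (EuclideanSpace ℂ (Fin d)) := borel _

instance (d : ℕ) : BorelSpace (EuclideanSpace ℂ (Fin d)) := ⟨rfl⟩

open Module Submodule Set

theorem Matrix.rank_gram {𝕜 E ι : Type*} [RCLike 𝕜] [NormedAddCommGroup E]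
    [InnerProductSpace 𝕜 E] [FiniteDimensional 𝕜 E] [Fintype ι] (v : ι → E) :
    (gram 𝕜 v).rank = finrank 𝕜 (span 𝕜 (range v)) := by
  let b := stdOrthonormalBasis 𝕜 E
  let e := b.repr.toLinearEquiv.trans (WithLp.linearEquiv 2 𝕜 (Fin (finrank 𝕜 E) → 𝕜))
  open ComplexOrder in
  rw [gram_eq_conjTranspose_mul b, rank_conjTranspose_mul_self, rank_eq_finrank_span_cols]
  have hcols : range (of fun i j => b.repr (v j) i).col = e '' range v := by
    rw [← range_comp]; rfl
  rw [hcols, ← LinearEquiv.coe_toLinearMap, ← map_span, LinearEquiv.finrank_map_eq]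

theorem finrank_span_range_cons_eq_min {K V : Type*} [DivisionRing K] [AddCommGroup V] [Module K V]
    [FiniteDimensional K V] {n : ℕ} {u : Fin n → V}
    (hu : finrank K (span K (range u)) = min n (finrank K V)) {y : V}
    (hy : n < finrank K V → y ∉ span K (range u)) :
    finrank K (span K (range (Fin.cons y u : Fin (n + 1) → V))) = min (n + 1) (finrank K V) := by
  rw [Fin.range_cons, span_insert, sup_comm]
  rcases lt_or_ge n (finrank K V) with hn | hn
  · rw [finrank_sup_span_singleton (hy hn), hu]
    omega
  · rw [eq_top_of_finrank_eq (hu.trans (min_eq_right hn)), top_sup_eq, finrank_top]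
    omega

theorem isOpen_setOf_le_finrank_span_range {𝕜 F ι : Type*} [NontriviallyNormedField 𝕜]
    [CompleteSpace 𝕜] [NormedAddCommGroup F] [NormedSpace 𝕜 F] [FiniteDimensional 𝕜 F] [Fintype ι]
    (k : ℕ) : IsOpen {u : ι → F | k ≤ finrank 𝕜 (span 𝕜 (range u))} := by
  classical
  let e := ContinuousLinearEquiv.piRing (𝕜 := 𝕜) (E := F) ι
  have hrange (u : ι → F) : LinearMap.range (e.symm u : (ι → 𝕜) →ₗ[𝕜] F) = span 𝕜 (range u) := by
    rw [← Fintype.range_linearCombination]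
    congr 1
    refine LinearMap.ext fun g => ?_
    change (LinearEquiv.piRing 𝕜 F ι 𝕜).symm u g = _
    rw [LinearEquiv.piRing_symm_apply, Fintype.linearCombination_apply]
  convert (isOpen_setOfPred_nat_le_rank k).preimage e.symm.continuous using 1
  ext u
  simp only [mem_preimage, mem_ofPred_eq, LinearMap.rank, ← finrank_eq_rank, Nat.cast_le]
  rw [hrange]

theorem measurableSet_setOf_finrank_span_range_eq {𝕜 F ι X : Type*} [NontriviallyNormedField 𝕜]
    [CompleteSpace 𝕜] [NormedAddCommGroup F] [NormedSpace 𝕜 F] [FiniteDimensional 𝕜 F] [Fintype ι]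
    [TopologicalSpace X] [MeasurableSpace X] [OpensMeasurableSpace X] {f : X → ι → F}
    (hf : Continuous f) (k : ℕ) :
    MeasurableSet {x | finrank 𝕜 (span 𝕜 (range (f x))) = k} := by
  have hopen (j : ℕ) : MeasurableSet {x | j ≤ finrank 𝕜 (span 𝕜 (range (f x)))} :=
    ((isOpen_setOf_le_finrank_span_range j).preimage hf).measurableSet
  convert (hopen k).diff (hopen (k + 1)) using 1
  ext x
  simp only [mem_ofPred_eq, mem_sdiff]
  omega

theorem MeasureTheory.Measure.ae_pi_of_ae_ae_cons {α : Type*} [MeasurableSpace α] (μ : Measure α)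
    [SigmaFinite μ] {n : ℕ} {P : (Fin (n + 1) → α) → Prop} (hP : MeasurableSet {v | P v})
    (h : ∀ᵐ w ∂(Measure.pi fun _ : Fin n => μ), ∀ᵐ x ∂μ, P (Fin.cons x w)) :
    ∀ᵐ v ∂(Measure.pi fun _ => μ), P v := by
  let e := MeasurableEquiv.piFinSuccAbove (fun _ : Fin (n + 1) => α) 0
  have hcons (v : Fin (n + 1) → α) : Fin.cons (e v).1 (e v).2 = v := by
    simp [e, MeasurableEquiv.piFinSuccAbove_apply]
  have hP' : MeasurableSet {p : α × (Fin n → α) | P (Fin.cons p.1 p.2)} := by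
    convert e.symm.measurable hP using 1
    simp only [e, MeasurableEquiv.piFinSuccAbove_symm_apply, Fin.insertNthEquiv_zero]
    rfl
  rw [← Measure.ae_ae_comm hP', ← Measure.ae_prod_iff_ae_ae hP'] at h
  filter_upwards [(measurePreserving_piFinSuccAbove (fun _ => μ) 0).quasiMeasurePreserving.ae h]
    with v hv
  rwa [hcons] at hv

section

variable {𝕜 E F : Type*} [DivisionRing 𝕜] [SMul ℝ 𝕜] [NormedAddCommGroup E] [NormedSpace ℝ E]
  [Module 𝕜 E] [IsScalarTower ℝ 𝕜 E] [FiniteDimensional ℝ E] [MeasurableSpace E] [BorelSpace E]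
  (μ : Measure E) [μ.IsAddHaarMeasure] [AddCommGroup F] [Module 𝕜 F] {T : E →ₗ[𝕜] F}

theorem MeasureTheory.Measure.ae_apply_notMem_of_ne_top (hT : Function.Surjective T)
    {p : Submodule 𝕜 F} (hp : p ≠ ⊤) :
    ∀ᵐ x ∂μ, T x ∉ p := by
  have hcomap : (p.comap T).restrictScalars ℝ ≠ ⊤ := by
    rw [Ne, restrictScalars_eq_top_iff]
    intro htop
    apply hp
    rw [← map_comap_eq_of_surjective hT p, htop, Submodule.map_top, LinearMap.range_eq_top.mpr hT]
  exact measure_eq_zero_iff_ae_notMem.1 (addHaar_submodule μ _ hcomap)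

theorem ae_finrank_span_range_comp_cons_eq_min [FiniteDimensional 𝕜 F]
    (hT : Function.Surjective T) {n : ℕ} {w : Fin n → E}
    (hw : finrank 𝕜 (span 𝕜 (range (T ∘ w))) = min n (finrank 𝕜 F)) :
    ∀ᵐ x ∂μ, finrank 𝕜 (span 𝕜 (range (T ∘ Fin.cons x w))) = min (n + 1) (finrank 𝕜 F) := by
  by_cases hn : n < finrank 𝕜 F
  · have hproper : span 𝕜 (range (T ∘ w)) ≠ ⊤ := by
      intro htop
      rw [htop, finrank_top] at hw
      omega
    filter_upwards [Measure.ae_apply_notMem_of_ne_top μ hT hproper] with x hx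
    rw [Fin.comp_cons]
    exact finrank_span_range_cons_eq_min hw fun _ => hx
  · refine Filter.Eventually.of_forall fun x => ?_
    rw [Fin.comp_cons]
    exact finrank_span_range_cons_eq_min hw (absurd · hn)

end

theorem ae_finrank_span_range_comp_eq_min {𝕜 E F : Type*} [RCLike 𝕜] [NormedAddCommGroup E]
    [NormedSpace 𝕜 E] [NormedSpace ℝ E] [IsScalarTower ℝ 𝕜 E] [FiniteDimensional 𝕜 E]
    [MeasurableSpace E] [BorelSpace E] (μ : Measure E) [μ.IsAddHaarMeasure]
    [NormedAddCommGroup F] [NormedSpace 𝕜 F] [FiniteDimensional 𝕜 F]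
    {T : E →ₗ[𝕜] F} (hT : Function.Surjective T) (n : ℕ) :
    ∀ᵐ v ∂(Measure.pi fun _ : Fin n => μ),
      finrank 𝕜 (span 𝕜 (range (T ∘ v))) = min n (finrank 𝕜 F) := by
  have := FiniteDimensional.trans ℝ 𝕜 E
  induction n with
  | zero => exact Filter.Eventually.of_forall fun v => by simp
  | succ n ih =>
    have hcont : Continuous fun v : Fin (n + 1) → E => T ∘ v :=
      continuous_pi fun i => T.continuous_of_finiteDimensional.comp (continuous_apply i)
    refine Measure.ae_pi_of_ae_ae_cons μ (measurableSet_setOf_finrank_span_range_eq hcont _) ?_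
    filter_upwards [ih] with w hw
    exact ae_finrank_span_range_comp_cons_eq_min μ hT hw

theorem projected_gram_rank_ae_min_general (d d' Ω : ℕ)
    (T : EuclideanSpace ℂ (Fin d) →ₗ[ℂ] EuclideanSpace ℂ (Fin d'))
    (hT : Function.Surjective T)
    (μ : Measure (Fin Ω → EuclideanSpace ℂ (Fin d)))
    (hμ : μ ≪ (volume : Measure (Fin Ω → EuclideanSpace ℂ (Fin d)))) :
    ∀ᵐ v ∂μ,
      (Matrix.of fun i j : Fin Ω => (inner ℂ (T (v i)) (T (v j)) : ℂ)).rank = min Ω d' := by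
  filter_upwards [hμ.ae_le (ae_finrank_span_range_comp_eq_min volume hT Ω)] with v hv
  rw [finrank_euclideanSpace_fin] at hv
  exact (Matrix.rank_gram fun i => T (v i)).trans hv

theorem projected_gram_rank_ae_min (d d' Ω : ℕ) (hd : 1 ≤ d) (hd' : 1 ≤ d') (hΩ : 1 ≤ Ω)
    (T : EuclideanSpace ℂ (Fin d) →ₗ[ℂ] EuclideanSpace ℂ (Fin d'))
    (hT : Function.Surjective T)
    (μ : Measure (Fin Ω → EuclideanSpace ℂ (Fin d))) [IsProbabilityMeasure μ]
    (hμ : μ ≪ (volume : Measure (Fin Ω → EuclideanSpace ℂ (Fin d)))) :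
    ∀ᵐ v ∂μ,
      (Matrix.of fun i j : Fin Ω => (inner ℂ (T (v i)) (T (v j)) : ℂ)).rank = min Ω d' :=
  projected_gram_rank_ae_min_general d d' Ω T hT μ hμ
end
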